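/- arXiv:1602.08850 — 7 statements merged into one kernel-verified Lean document; each statement's English description precedes it below -/
import Mathlib

section
/- Let Ω ⊂ ℝ^d be a bounded measurable set of positive measure, and set f(x) := |𝟙̂_Ω(x)|² / |Ω|². Then for a discrete set Λ ⊂ ℝ^d, the exponential system E(Λ) is orthogonal in L²(Ω) if and only if f + Λ is a packing, i.e., ∑_{λ∈Λ} f(x − λ) ≤ 1 for almost every x ∈ ℝ^d. -/
/-!
Write `f = ‖𝟙̂_Ω‖² / |Ω|²`. In `L²(Ω)` one has `⟪e_λ, e_μ⟫ = conj 𝟙̂_Ω(μ - λ)` and `‖e_λ‖² = |Ω|`.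
If `E(Λ)` is orthogonal, Bessel's inequality for the normalized system `e_λ / √|Ω|`, applied to
`e_x`, gives `∑_λ f(x - λ) ≤ 1` at every `x`. Conversely, `f` is continuous, so the packing
inequality, valid on a set of full (hence dense) measure, holds everywhere; at `x = μ` it reads
`f(μ - λ) + f(0) ≤ 1`, and `f(0) = 1` forces `𝟙̂_Ω(μ - λ) = 0`, i.e. `e_λ ⊥ e_μ`.
-/

open MeasureTheory Complex Set
open scoped Pointwise ENNReal RealInnerProductSpace

noncomputable section

/-- Euclidean space `ℝ^d`. -/
abbrev Ed (d : ℕ) := EuclideanSpace ℝ (Fin d)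

/-- The exponential function `e_λ(x) = exp(2πi⟨λ,x⟩)` on `ℝ^d`. -/
def expF {d : ℕ} (l x : Ed d) : ℂ :=
  Complex.exp (2 * Real.pi * Complex.I * Complex.ofReal (inner ℝ l x : ℝ))

/-- The Fourier transform of the indicator function of `Ω ⊆ ℝ^d`. -/
def ftInd {d : ℕ} (Om : Set (Ed d)) (xi : Ed d) : ℂ :=
  ∫ x in Om, Complex.exp (-(2 * Real.pi * Complex.I * Complex.ofReal (inner ℝ xi x : ℝ)))

/-- The exponential system `E(Λ)` is orthogonal in `L²(Ω)`. -/
def IsOrthSys {d : ℕ} (Om L : Set (Ed d)) : Prop :=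
  ∀ l ∈ L, ∀ m ∈ L, l ≠ m →
    ∫ x in Om, expF l x * (starRingEnd ℂ) (expF m x) = 0

/-- `Λ` is a spectrum for `Ω`: the system `E(Λ)` is orthogonal and complete in `L²(Ω)`. -/
def IsSpectrum {d : ℕ} (Om L : Set (Ed d)) : Prop :=
  IsOrthSys Om L ∧
  ∀ f : Ed d → ℂ, MemLp f 2 (volume.restrict Om) →
    (∀ l ∈ L, ∫ x in Om, f x * (starRingEnd ℂ) (expF l x) = 0) →
    f =ᵐ[volume.restrict Om] 0

/-- `f + Λ` is a tiling: `∑_{λ∈Λ} f(x-λ) = 1` a.e. -/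
def IsTiling {E : Type*} [NormedAddCommGroup E] [MeasureSpace E]
    (f : E → ℝ) (L : Set E) : Prop :=
  ∀ᵐ x : E, ∑' l : L, ENNReal.ofReal (f (x - (l : E))) = 1

/-- `f + Λ` is a packing: `∑_{λ∈Λ} f(x-λ) ≤ 1` a.e. -/
def IsPacking {E : Type*} [NormedAddCommGroup E] [MeasureSpace E]
    (f : E → ℝ) (L : Set E) : Prop :=
  ∀ᵐ x : E, ∑' l : L, ENNReal.ofReal (f (x - (l : E))) ≤ 1

/-- `Λ` is uniformly discrete with separation constant at least `δ`. -/
def UnifDiscrete {E : Type*} [PseudoMetricSpace E] (L : Set E) (δ : ℝ) : Prop :=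
  ∀ l ∈ L, ∀ m ∈ L, l ≠ m → δ ≤ dist l m

/-- Weak convergence of a sequence of uniformly discrete sets. -/
def WeakLim {E : Type*} [SeminormedAddCommGroup E] (Ln : ℕ → Set E) (L : Set E) : Prop :=
  ∀ ε > (0 : ℝ), ∀ R > (0 : ℝ), ∃ N : ℕ, ∀ n ≥ N,
    Ln n ∩ Metric.ball 0 R ⊆ L + Metric.ball 0 ε ∧
    L ∩ Metric.ball 0 R ⊆ Ln n + Metric.ball 0 ε

section Packing

variable {E : Type*} [NormedAddCommGroup E] [MeasureSpace E] [(volume : Measure E).IsOpenPosMeasure]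

theorem isPacking_iff_forall_sum_le_one {f : E → ℝ} (hf : Continuous f) (hf₀ : 0 ≤ f)
    (L : Set E) : IsPacking f L ↔ ∀ x, ∀ s : Finset L, ∑ l ∈ s, f (x - l) ≤ 1 := by
  have sum_le_iff (x : E) : ∑' l : L, ENNReal.ofReal (f (x - l)) ≤ 1 ↔
      ∀ s : Finset L, ∑ l ∈ s, f (x - l) ≤ 1 := by
    simp_rw [ENNReal.tsum_eq_iSup_sum, iSup_le_iff,
      ← ENNReal.ofReal_sum_of_nonneg fun l _ => hf₀ _, ENNReal.ofReal_le_one]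
  refine ⟨fun hP x s => ?_, fun h => .of_forall fun x => (sum_le_iff x).2 (h x)⟩
  have hclosed : IsClosed {x | ∑ l ∈ s, f (x - l) ≤ 1} :=
    isClosed_le (continuous_finsetSum _ fun l _ => hf.comp (continuous_sub_right _))
      continuous_const
  have hdense : Dense {x | ∑ l ∈ s, f (x - l) ≤ 1} :=
    Measure.dense_of_ae (hP.mono fun x hx => (sum_le_iff x).1 hx s)
  have hx : x ∈ closure {x | ∑ l ∈ s, f (x - l) ≤ 1} := hdense.closure_eq ▸ Set.mem_univ x
  rwa [hclosed.closure_eq] at hx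

end Packing

theorem sum_norm_inner_sq_le_of_orthogonal {𝕜 E ι : Type*} [RCLike 𝕜] [NormedAddCommGroup E]
    [InnerProductSpace 𝕜 E] {v : ι → E} {c : ℝ} (hv : Pairwise fun i j => inner 𝕜 (v i) (v j) = 0)
    (hc : ∀ i, ‖v i‖ = c) (x : E) (s : Finset ι) :
    ∑ i ∈ s, ‖inner 𝕜 (v i) x‖ ^ 2 ≤ c ^ 2 * ‖x‖ ^ 2 := by
  rcases eq_or_ne c 0 with rfl | hc₀
  · simp [fun i => norm_eq_zero.1 (hc i)]
  have hon : Orthonormal 𝕜 fun i => ((c : 𝕜)⁻¹) • v i := by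
    refine ⟨fun i => ?_, fun i j hij => ?_⟩
    · rw [norm_smul, hc, norm_inv, RCLike.norm_ofReal, abs_eq_self.2 ?_, inv_mul_cancel₀ hc₀]
      simpa [hc] using norm_nonneg (v i)
    · simp [inner_smul_left, inner_smul_right, hv hij]
  have hBessel := hon.sum_inner_products_le x (s := s)
  simp_rw [inner_smul_left, norm_mul, mul_pow, RCLike.norm_conj, norm_inv, RCLike.norm_ofReal,
    ← Finset.mul_sum, inv_pow, sq_abs] at hBessel
  rwa [inv_mul_le_iff₀ (by positivity)] at hBessel

section Exponentials

variable {d : ℕ}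

theorem continuous_expF (l : Ed d) : Continuous (expF l) := by
  unfold expF; fun_prop

theorem norm_expF (l x : Ed d) : ‖expF l x‖ = 1 := by
  simp [expF, Complex.norm_exp]

theorem expF_mul_conj_expF (l m x : Ed d) :
    expF l x * starRingEnd ℂ (expF m x) =
      Complex.exp (-(2 * Real.pi * Complex.I * Complex.ofReal (inner ℝ (m - l) x))) := by
  rw [expF, expF, ← Complex.exp_conj, ← Complex.exp_add, inner_sub_left]
  congr 1
  simp only [map_mul, Complex.conj_ofReal, Complex.conj_I, map_ofNat]
  push_cast
  ring

theorem integral_expF_mul_conj_expF (Om : Set (Ed d)) (l m : Ed d) :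
    ∫ x in Om, expF l x * starRingEnd ℂ (expF m x) = ftInd Om (m - l) := by
  simp_rw [expF_mul_conj_expF, ftInd]

theorem ftInd_zero (Om : Set (Ed d)) : ftInd Om 0 = (volume Om).toReal := by
  simp [ftInd, measureReal_def]

variable {Om : Set (Ed d)} [Fact (volume Om < ⊤)]

theorem continuous_ftInd : Continuous (ftInd Om) := by
  refine continuous_of_dominated (bound := fun _ => 1) (fun ξ => ?_) (fun ξ => ?_)
    (integrable_const 1) (.of_forall fun x => by fun_prop)
  · exact Continuous.aestronglyMeasurable (by fun_prop)
  · exact .of_forall fun x => by simp [Complex.norm_exp]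

theorem memLp_expF (p : ℝ≥0∞) (l : Ed d) : MemLp (expF l) p (volume.restrict Om) :=
  .of_bound (continuous_expF l).aestronglyMeasurable 1 (.of_forall fun x => (norm_expF l x).le)

def expLp (l : Ed d) : Lp ℂ 2 (volume.restrict Om) :=
  (memLp_expF 2 l).toLp (expF l)

theorem coeFn_expLp (l : Ed d) : expLp (Om := Om) l =ᵐ[volume.restrict Om] expF l :=
  (memLp_expF 2 l).coeFn_toLp

theorem inner_expLp (l m : Ed d) :
    inner ℂ (expLp (Om := Om) l) (expLp m) = starRingEnd ℂ (ftInd Om (m - l)) := by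
  rw [L2.inner_def, ← integral_expF_mul_conj_expF, ← integral_conj]
  refine integral_congr_ae ?_
  filter_upwards [coeFn_expLp l, coeFn_expLp m] with x hl hm
  simp [hl, hm, mul_comm]

theorem norm_expLp (l : Ed d) : ‖expLp (Om := Om) l‖ = Real.sqrt (volume Om).toReal := by
  rw [← Real.sqrt_sq (norm_nonneg _), ← inner_self_eq_norm_sq (𝕜 := ℂ), inner_expLp, sub_self,
    ftInd_zero]
  simp

theorem sum_norm_ftInd_sq_le_of_isOrthSys {L : Set (Ed d)} (hL : IsOrthSys Om L) (x : Ed d)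
    (s : Finset L) : ∑ l ∈ s, ‖ftInd Om (x - l)‖ ^ 2 ≤ (volume Om).toReal ^ 2 := by
  have horth : Pairwise fun l m : L => inner ℂ (expLp (Om := Om) l) (expLp m) = 0 := by
    intro l m hlm
    rw [inner_expLp, ← integral_expF_mul_conj_expF, hL l l.2 m m.2 (Subtype.coe_ne_coe.2 hlm),
      map_zero]
  have hBessel := sum_norm_inner_sq_le_of_orthogonal horth (fun l => norm_expLp l.1)
    (expLp (Om := Om) x) s
  simp only [inner_expLp, RCLike.norm_conj] at hBessel
  rwa [norm_expLp, Real.sq_sqrt ENNReal.toReal_nonneg, ← sq] at hBessel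

end Exponentials

theorem stmt5_general {d : ℕ} (Om : Set (Ed d)) (hB : Bornology.IsBounded Om)
    (hpos : 0 < volume Om) (L : Set (Ed d)) :
    IsOrthSys Om L ↔
      IsPacking (fun x => ‖ftInd Om x‖ ^ 2 / (volume Om).toReal ^ 2) L := by
  have : Fact (volume Om < ⊤) := ⟨hB.measure_lt_top⟩
  have hvol : 0 < (volume Om).toReal := ENNReal.toReal_pos hpos.ne' hB.measure_lt_top.ne
  have hcont : Continuous fun x => ‖ftInd Om x‖ ^ 2 / (volume Om).toReal ^ 2 :=
    (continuous_ftInd.norm.pow 2).div_const _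
  rw [isPacking_iff_forall_sum_le_one hcont fun _ => by positivity]
  refine ⟨fun hL x s => ?_, fun h l hl m hm hlm => ?_⟩
  · rw [← Finset.sum_div, div_le_one (by positivity)]
    exact sum_norm_ftInd_sq_le_of_isOrthSys hL x s
  · have hpair := h m {⟨l, hl⟩, ⟨m, hm⟩}
    rw [Finset.sum_pair (by simpa using hlm), sub_self, ftInd_zero, Complex.norm_real,
      Real.norm_eq_abs, sq_abs, div_self (pow_pos hvol 2).ne', add_le_iff_nonpos_left,
      div_le_iff₀ (by positivity), zero_mul] at hpair
    rw [integral_expF_mul_conj_expF]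
    simpa using hpair

theorem stmt5 {d : ℕ} (Om : Set (Ed d)) (hB : Bornology.IsBounded Om)
    (hM : MeasurableSet Om) (hpos : 0 < volume Om) (L : Set (Ed d)) :
    IsOrthSys Om L ↔
      IsPacking (fun x => ‖ftInd Om x‖ ^ 2 / (volume Om).toReal ^ 2) L :=
  stmt5_general Om hB hpos L
end
end

section
/- Let Ω ⊂ ℝ^d be bounded and measurable, and suppose Ω + Λ_n is a tiling for every n, where the Λ_n are uniformly discrete with separation constants bounded below by δ > 0. If Λ_n converges weakly to Λ, then Ω + Λ is also a tiling. -/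
open MeasureTheory Complex Set
open scoped Pointwise ENNReal RealInnerProductSpace

noncomputable section

/-!
A tiling by translates of `Ω` along a countable set amounts to two a.e. statements: the
translates cover almost every point, and two distinct translates meet in a null set. Both pass
to a weak limit `Λ` of tilings `Λₙ` because translation is continuous in measure,
`|(a + Ω) ∆ (b + Ω)| → 0` as `b → a`. Two distinct points of `Λ` are approximated by two
distinct points of some `Λₙ`, whose translates are almost disjoint. If `Ω ⊆ B(0, R)`, a point
of `B(0, r)` missed by `Ω + Λ` lies, for large `n`, in `(a + Ω) \ (b + Ω)` for some
`a ∈ Λₙ ∩ B(0, r + R)` and `b ∈ Λ` close to `a`; since the translates along `Λₙ` pack, there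
are at most `|B(0, r + 2R)| / |Ω|` such `a`. Uniform discreteness with constant `δ` also passes
to `Λ`, which makes `Λ` countable.
-/

open Metric Filter Topology
open scoped symmDiff

section UniformlyDiscrete

variable {X : Type*} [MetricSpace X] {L S : Set X} {δ : ℝ}

lemma UnifDiscrete.mono (hL : UnifDiscrete L δ) (hS : S ⊆ L) : UnifDiscrete S δ :=
  fun l hl m hm => hL l (hS hl) m (hS hm)

lemma UnifDiscrete.discreteTopology (hL : UnifDiscrete L δ) (hδ : 0 < δ) :
    DiscreteTopology L :=
  .of_forall_le_dist hδ fun l m hlm => hL l l.2 m m.2 (Subtype.coe_ne_coe.2 hlm)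

lemma UnifDiscrete.finite_of_isBounded [ProperSpace X] (hL : UnifDiscrete L δ) (hδ : 0 < δ)
    (hb : Bornology.IsBounded L) : L.Finite :=
  (isCompact_of_isClosed_isBounded (isClosed_of_pairwise_le_dist hδ hL) hb).finite
    ⟨hL.discreteTopology hδ⟩

lemma UnifDiscrete.countable [SecondCountableTopology X] (hL : UnifDiscrete L δ) (hδ : 0 < δ) :
    L.Countable :=
  (HereditarilyLindelofSpace.isLindelof L).countable (hL.discreteTopology hδ)

end UniformlyDiscrete

namespace WeakLim

variable {E : Type*} [NormedAddCommGroup E] {Ln : ℕ → Set E} {L : Set E} {ε : ℝ}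

lemma eventually_exists_dist_lt (hw : WeakLim Ln L) {l : E} (hl : l ∈ L) (hε : 0 < ε) :
    ∀ᶠ n in atTop, ∃ a ∈ Ln n, dist l a < ε := by
  obtain ⟨N, hN⟩ := hw ε hε (‖l‖ + 1) (by positivity)
  filter_upwards [eventually_ge_atTop N] with n hn
  have hl' : l ∈ L ∩ ball 0 (‖l‖ + 1) := ⟨hl, by simp⟩
  simpa only [add_ball_zero, mem_thickening_iff] using (hN n hn).2 hl'

lemma eventually_forall_exists_dist_lt (hw : WeakLim Ln L) (hε : 0 < ε) (R : ℝ) :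
    ∀ᶠ n in atTop, ∀ a ∈ Ln n, ‖a‖ < R → ∃ b ∈ L, dist a b < ε := by
  obtain ⟨N, hN⟩ := hw ε hε (max R 1) (by positivity)
  filter_upwards [eventually_ge_atTop N] with n hn a ha haR
  have ha' : a ∈ Ln n ∩ ball 0 (max R 1) := ⟨ha, by simpa using haR.trans_le (le_max_left R 1)⟩
  simpa only [add_ball_zero, mem_thickening_iff] using (hN n hn).1 ha'

lemma exists_ne_approx_of_ne (hw : WeakLim Ln L) {l m : E} (hl : l ∈ L) (hm : m ∈ L)
    (hlm : l ≠ m) (hε : 0 < ε) :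
    ∃ n, ∃ a ∈ Ln n, ∃ b ∈ Ln n, a ≠ b ∧ dist l a < ε ∧ dist m b < ε := by
  set ε' := min ε (dist l m / 2)
  have hε' : 0 < ε' := lt_min hε (half_pos (dist_pos.2 hlm))
  obtain ⟨n, ⟨a, ha, hla⟩, ⟨b, hb, hmb⟩⟩ :=
    ((hw.eventually_exists_dist_lt hl hε').and (hw.eventually_exists_dist_lt hm hε')).exists
  refine ⟨n, a, ha, b, hb, ?_, hla.trans_le (min_le_left _ _), hmb.trans_le (min_le_left _ _)⟩
  rintro rfl
  have := dist_triangle_right l m a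
  have := min_le_right ε (dist l m / 2)
  linarith

lemma unifDiscrete (hw : WeakLim Ln L) {δ : ℝ} (hud : ∀ n, UnifDiscrete (Ln n) δ) :
    UnifDiscrete L δ := by
  intro l hl m hm hlm
  refine le_of_forall_pos_lt_add fun ε hε => ?_
  obtain ⟨n, a, ha, b, hb, hab, hla, hmb⟩ := hw.exists_ne_approx_of_ne hl hm hlm (half_pos hε)
  calc δ ≤ dist a b := hud n a ha b hb hab
    _ ≤ dist l a + dist l m + dist m b := by
      rw [dist_comm l a]; exact dist_triangle4 a l m b
    _ < dist l m + ε := by linarith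

end WeakLim

lemma ENNReal.eq_zero_of_forall_le_mul {x C : ℝ≥0∞} (hC : C ≠ ∞) (h : ∀ η ≠ 0, x ≤ C * η) :
    x = 0 := by
  rcases eq_or_ne C 0 with rfl | hC₀
  · simpa using h 1 one_ne_zero
  refine le_antisymm (ENNReal.le_of_forall_pos_le_add fun ξ hξ _ => ?_) bot_le
  have hη : (ξ : ℝ≥0∞) / C ≠ 0 := by simp [ENNReal.div_eq_zero_iff, hξ.ne', hC]
  simpa [ENNReal.mul_div_cancel hC₀ hC] using h _ hη

section Translation

lemma mem_vadd_set_iff_sub_mem {G : Type*} [AddCommGroup G] {s : Set G} {v x : G} :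
    x ∈ v +ᵥ s ↔ x - v ∈ s := by
  rw [mem_vadd_set_iff_neg_vadd_mem, vadd_eq_add, neg_add_eq_sub]

variable {G : Type*} [NormedAddCommGroup G] [MeasurableSpace G] [BorelSpace G] {μ : Measure G}
  [μ.IsAddLeftInvariant] [μ.InnerRegularCompactLTTop] [IsLocallyFiniteMeasure μ] {s : Set G}

lemma tendsto_measure_vadd_symmDiff (hs : NullMeasurableSet s μ) (hμs : μ s ≠ ∞) :
    Tendsto (fun v : G => μ ((v +ᵥ s) ∆ s)) (𝓝 0) (𝓝 0) := by
  let f : G → C(G, G) := fun v => ⟨(· - v), by fun_prop⟩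
  have hf : Continuous f :=
    ContinuousMap.continuous_of_continuous_uncurry _ (continuous_snd.sub continuous_fst)
  have hf0 : f 0 = ContinuousMap.id G := by ext; simp [f]
  have hpre : ∀ v, f v ⁻¹' s = v +ᵥ s := fun v => by ext; simp [f, mem_vadd_set_iff_sub_mem]
  have := tendsto_measure_symmDiff_preimage_nhds_zero (hf0 ▸ hf.tendsto 0)
    (.of_forall fun v => measurePreserving_sub_right μ v) (.id μ) hs hμs
  simp only [hpre] at this
  exact this

lemma exists_forall_dist_lt_measure_vadd_symmDiff_le (hs : NullMeasurableSet s μ)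
    (hμs : μ s ≠ ∞) {η : ℝ≥0∞} (hη : η ≠ 0) :
    ∃ ε > 0, ∀ a b : G, dist a b < ε → μ ((a +ᵥ s) ∆ (b +ᵥ s)) ≤ η := by
  obtain ⟨ε, hε, hsmall⟩ := Metric.eventually_nhds_iff.1
    ((tendsto_measure_vadd_symmDiff hs hμs).eventually_lt_const (pos_iff_ne_zero.2 hη))
  refine ⟨ε, hε, fun a b hab => ?_⟩
  have hshift : (a +ᵥ s) ∆ (b +ᵥ s) = b +ᵥ (((a - b) +ᵥ s) ∆ s) := by
    rw [vadd_set_symmDiff, vadd_vadd, add_sub_cancel]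
  rw [hshift, measure_vadd]
  exact (hsmall (by rwa [dist_zero_right, ← dist_eq_norm])).le

end Translation

section Tiling

variable {E : Type*} [NormedAddCommGroup E] [MeasureSpace E] {Om L : Set E}

lemma isTiling_indicator_one_iff :
    IsTiling (Set.indicator Om (fun _ => (1 : ℝ))) L ↔
      ∀ᵐ x : E, ∑' l : L, ((l : E) +ᵥ Om).indicator (1 : E → ℝ≥0∞) x = 1 := by
  have hterm : ∀ x l : E, ENNReal.ofReal (Set.indicator Om (fun _ => (1 : ℝ)) (x - l)) =
      (l +ᵥ Om).indicator (1 : E → ℝ≥0∞) x := fun x l => by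
    by_cases hx : x - l ∈ Om <;> simp [hx, mem_vadd_set_iff_sub_mem]
  unfold IsTiling
  simp_rw [hterm]

lemma IsTiling.ae_exists_mem_vadd (h : IsTiling (Set.indicator Om (fun _ => (1 : ℝ))) L) :
    ∀ᵐ x : E, ∃ l ∈ L, x ∈ l +ᵥ Om := by
  filter_upwards [isTiling_indicator_one_iff.1 h] with x hx
  by_contra! hnot
  simp [indicator_of_notMem (hnot _ _)] at hx

lemma IsTiling.measure_vadd_inter_vadd (h : IsTiling (Set.indicator Om (fun _ => (1 : ℝ))) L)
    {a b : E} (ha : a ∈ L) (hb : b ∈ L) (hab : a ≠ b) :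
    volume ((a +ᵥ Om) ∩ (b +ᵥ Om)) = 0 := by
  refine measure_mono_null (fun x hx => ?_) (ae_iff.1 (isTiling_indicator_one_iff.1 h))
  obtain ⟨hxa, hxb⟩ := hx
  intro hx
  classical
  have hpair : (⟨a, ha⟩ : L) ≠ ⟨b, hb⟩ := by simpa using hab
  have h2 := ENNReal.sum_le_tsum (f := fun l : L => ((l : E) +ᵥ Om).indicator 1 x)
    {⟨a, ha⟩, ⟨b, hb⟩}
  rw [Finset.sum_pair hpair, hx] at h2
  simp [indicator_of_mem hxa, indicator_of_mem hxb, one_add_one_eq_two] at h2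

lemma isTiling_of_ae_exists_mem_vadd (hL : L.Countable) (hcov : ∀ᵐ x : E, ∃ l ∈ L, x ∈ l +ᵥ Om)
    (hdisj : L.Pairwise fun a b => volume ((a +ᵥ Om) ∩ (b +ᵥ Om)) = 0) :
    IsTiling (Set.indicator Om (fun _ => (1 : ℝ))) L := by
  have hunique : ∀ᵐ x : E, ∀ a ∈ L, ∀ b ∈ L, a ≠ b → x ∉ (a +ᵥ Om) ∩ (b +ᵥ Om) := by
    refine (ae_ball_iff hL).2 fun a ha => (ae_ball_iff hL).2 fun b hb => ?_
    rcases eq_or_ne a b with rfl | hab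
    · exact .of_forall fun _ h => (h rfl).elim
    · filter_upwards [measure_eq_zero_iff_ae_notMem.1 (hdisj ha hb hab)] with x hx
        using fun _ => hx
  rw [isTiling_indicator_one_iff]
  filter_upwards [hcov, hunique] with x ⟨l, hl, hxl⟩ hx
  rw [tsum_eq_single (⟨l, hl⟩ : L) fun m hm => indicator_of_notMem (fun hxm =>
    hx m m.2 l hl (fun h => hm (Subtype.ext h)) ⟨hxm, hxl⟩) _]
  simp [hxl]

variable [BorelSpace E] [ProperSpace E] [(volume : Measure E).IsAddHaarMeasure]

lemma IsTiling.measure_ne_zero (h : IsTiling (Set.indicator Om (fun _ => (1 : ℝ))) L)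
    (hL : L.Countable) : volume Om ≠ 0 := by
  intro h0
  have hmiss : ∀ᵐ x : E, ∀ l ∈ L, x ∉ l +ᵥ Om := (ae_ball_iff hL).2 fun l _ =>
    measure_eq_zero_iff_ae_notMem.1 (by rw [measure_vadd]; exact h0)
  have hfalse : ∀ᵐ _ : E, False := by
    filter_upwards [h.ae_exists_mem_vadd, hmiss] with x ⟨l, hl, hx⟩ hn using hn l hl hx
  exact NeZero.ne (volume : Measure E) (ae_eq_bot.1 (eventually_false_iff_eq_bot.1 hfalse))

lemma IsTiling.measure_biUnion_finset (h : IsTiling (Set.indicator Om (fun _ => (1 : ℝ))) L)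
    (hM : MeasurableSet Om) {S : Finset E} (hS : ↑S ⊆ L) :
    volume (⋃ a ∈ S, a +ᵥ Om) = S.card * volume Om := by
  rw [measure_biUnion_finset₀
    (fun a ha b hb hab => h.measure_vadd_inter_vadd (hS ha) (hS hb) hab)
    fun a _ => (hM.const_vadd a).nullMeasurableSet]
  simp [measure_vadd]

end Tiling

lemma measure_inter_le_add_symmDiff {α : Type*} [MeasurableSpace α] (μ : Measure α)
    (s t s' t' : Set α) : μ (s ∩ t) ≤ μ (s' ∩ t') + μ (s ∆ s') + μ (t ∆ t') := by
  have hsub : s ∩ t ⊆ (s' ∩ t') ∪ (s ∆ s') ∪ (t ∆ t') := by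
    rintro x ⟨hs, ht⟩
    by_cases hs' : x ∈ s'
    · by_cases ht' : x ∈ t'
      · exact Or.inl (Or.inl ⟨hs', ht'⟩)
      · exact Or.inr (Or.inl ⟨ht, ht'⟩)
    · exact Or.inl (Or.inr (Or.inl ⟨hs, hs'⟩))
  calc μ (s ∩ t) ≤ μ ((s' ∩ t') ∪ (s ∆ s') ∪ (t ∆ t')) := measure_mono hsub
    _ ≤ μ (s' ∩ t') + μ (s ∆ s') + μ (t ∆ t') :=
      (measure_union_le _ _).trans (by gcongr; exact measure_union_le _ _)

namespace WeakLim

variable {E : Type*} [NormedAddCommGroup E] [MeasureSpace E] [BorelSpace E] [ProperSpace E]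
  [(volume : Measure E).IsAddHaarMeasure] {Om : Set E} {Ln : ℕ → Set E} {L : Set E}

lemma measure_vadd_inter_vadd (hM : MeasurableSet Om) (hB : Bornology.IsBounded Om)
    (ht : ∀ n, IsTiling (Set.indicator Om (fun _ => (1 : ℝ))) (Ln n)) (hw : WeakLim Ln L)
    {l m : E} (hl : l ∈ L) (hm : m ∈ L) (hlm : l ≠ m) :
    volume ((l +ᵥ Om) ∩ (m +ᵥ Om)) = 0 := by
  refine ENNReal.eq_zero_of_forall_le_mul (C := 2) ENNReal.ofNat_ne_top fun η hη => ?_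
  obtain ⟨ε, hε, hsymm⟩ :=
    exists_forall_dist_lt_measure_vadd_symmDiff_le hM.nullMeasurableSet
      (hB.measure_lt_top (μ := volume)).ne hη
  obtain ⟨n, a, ha, b, hb, hab, hla, hmb⟩ := hw.exists_ne_approx_of_ne hl hm hlm hε
  calc volume ((l +ᵥ Om) ∩ (m +ᵥ Om))
      ≤ volume ((a +ᵥ Om) ∩ (b +ᵥ Om)) + volume ((l +ᵥ Om) ∆ (a +ᵥ Om))
        + volume ((m +ᵥ Om) ∆ (b +ᵥ Om)) := measure_inter_le_add_symmDiff _ _ _ _ _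
    _ ≤ 0 + η + η := by
      gcongr
      exacts [((ht n).measure_vadd_inter_vadd ha hb hab).le, hsymm l a hla, hsymm m b hmb]
    _ = 2 * η := by ring

variable {δ : ℝ}

lemma measure_ball_diff_biUnion_vadd_mul_le (hM : MeasurableSet Om) (hB : Bornology.IsBounded Om)
    (hδ : 0 < δ) (hud : ∀ n, UnifDiscrete (Ln n) δ)
    (ht : ∀ n, IsTiling (Set.indicator Om (fun _ => (1 : ℝ))) (Ln n)) (hw : WeakLim Ln L)
    {R r : ℝ} (hOm : Om ⊆ ball 0 R) {η : ℝ≥0∞} (hη : η ≠ 0) :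
    volume (ball 0 r \ ⋃ l ∈ L, l +ᵥ Om) * volume Om ≤
      volume (ball (0 : E) (r + 2 * R)) * η := by
  have hnorm : ∀ {a x : E}, x ∈ a +ᵥ Om → ‖x - a‖ < R := fun hx =>
    mem_ball_zero_iff.1 (hOm (mem_vadd_set_iff_sub_mem.1 hx))
  obtain ⟨ε, hε, hsymm⟩ :=
    exists_forall_dist_lt_measure_vadd_symmDiff_le hM.nullMeasurableSet
      (hB.measure_lt_top (μ := volume)).ne hη
  obtain ⟨N, hN⟩ := (hw.eventually_forall_exists_dist_lt hε (r + R)).exists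
  have hfin : (Ln N ∩ ball 0 (r + R)).Finite :=
    ((hud N).mono inter_subset_left).finite_of_isBounded hδ
      (isBounded_ball.subset inter_subset_right)
  set S := hfin.toFinset
  have hS : ∀ {a}, a ∈ S ↔ a ∈ Ln N ∧ ‖a‖ < r + R := by simp [S]
  choose! f hfL hf using fun a (ha : a ∈ S) => hN a (hS.1 ha).1 (hS.1 ha).2
  have huncovered : volume (ball 0 r \ ⋃ l ∈ L, l +ᵥ Om) ≤ S.card * η := by
    calc volume (ball 0 r \ ⋃ l ∈ L, l +ᵥ Om)
        ≤ volume (⋃ a ∈ S, (a +ᵥ Om) \ (f a +ᵥ Om)) := by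
          refine measure_mono_ae ?_
          filter_upwards [(ht N).ae_exists_mem_vadd] with x ⟨a, ha, hxa⟩ ⟨hxr, hxL⟩
          have haS : a ∈ S := hS.2 ⟨ha, by
            linarith [norm_le_insert x a, mem_ball_zero_iff.1 hxr, hnorm hxa]⟩
          exact mem_biUnion haS ⟨hxa, fun hxf => hxL (mem_biUnion (hfL a haS) hxf)⟩
      _ ≤ ∑ a ∈ S, volume ((a +ᵥ Om) \ (f a +ᵥ Om)) := measure_biUnion_finset_le _ _
      _ ≤ ∑ _a ∈ S, η := Finset.sum_le_sum fun a ha =>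
          (measure_mono fun x hx => Or.inl hx).trans (hsymm _ _ (hf a ha))
      _ = S.card * η := by simp
  have hpacked : S.card * volume Om ≤ volume (ball (0 : E) (r + 2 * R)) := by
    rw [← (ht N).measure_biUnion_finset hM fun a ha => (hS.1 ha).1]
    refine measure_mono (iUnion₂_subset fun a ha x hx => mem_ball_zero_iff.2 ?_)
    linarith [norm_le_insert' x a, (hS.1 ha).2, hnorm hx]
  calc volume (ball 0 r \ ⋃ l ∈ L, l +ᵥ Om) * volume Om ≤ S.card * η * volume Om := by gcongr
    _ = S.card * volume Om * η := by ring
    _ ≤ volume (ball (0 : E) (r + 2 * R)) * η := by gcongr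

lemma ae_exists_mem_vadd (hM : MeasurableSet Om) (hB : Bornology.IsBounded Om)
    (hδ : 0 < δ) (hud : ∀ n, UnifDiscrete (Ln n) δ)
    (ht : ∀ n, IsTiling (Set.indicator Om (fun _ => (1 : ℝ))) (Ln n)) (hw : WeakLim Ln L) :
    ∀ᵐ x : E, ∃ l ∈ L, x ∈ l +ᵥ Om := by
  obtain ⟨R, -, hOm⟩ := hB.subset_ball_lt 0 0
  have hvol : volume Om ≠ 0 := (ht 0).measure_ne_zero ((hud 0).countable hδ)
  have hball : ∀ n : ℕ, volume (ball (0 : E) n \ ⋃ l ∈ L, l +ᵥ Om) = 0 := fun n =>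
    (mul_eq_zero.1 (ENNReal.eq_zero_of_forall_le_mul measure_ball_lt_top.ne fun η hη =>
      hw.measure_ball_diff_biUnion_vadd_mul_le hM hB hδ hud ht hOm hη)).resolve_right hvol
  refine measure_mono_null (fun x hx => ?_) (measure_iUnion_null hball)
  obtain ⟨n, hn⟩ := exists_nat_gt ‖x‖
  refine mem_iUnion.2 ⟨n, mem_ball_zero_iff.2 hn, fun hxL => ?_⟩
  obtain ⟨l, hl, hxl⟩ := mem_iUnion₂.1 hxL
  exact hx ⟨l, hl, hxl⟩

end WeakLim

theorem stmt9 {d : ℕ} (Om : Set (Ed d)) (hB : Bornology.IsBounded Om)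
    (hM : MeasurableSet Om)
    (Ln : ℕ → Set (Ed d)) (L : Set (Ed d)) (δ : ℝ) (hδ : 0 < δ)
    (hud : ∀ n, UnifDiscrete (Ln n) δ)
    (ht : ∀ n, IsTiling (Set.indicator Om (fun _ => (1 : ℝ))) (Ln n))
    (hw : WeakLim Ln L) :
    IsTiling (Set.indicator Om (fun _ => (1 : ℝ))) L :=
  isTiling_of_ae_exists_mem_vadd ((hw.unifDiscrete hud).countable hδ)
    (hw.ae_exists_mem_vadd hM hB hδ hud ht)
    fun _ hl _ hm hlm => hw.measure_vadd_inter_vadd hM hB ht hl hm hlm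
end
end

section
/- Let A, B be discrete sets in ℝ^d and τ ∈ ℝ^d, such that each of B, B + τ, B − τ is disjoint from A. Set Λ := A ∪ B, Λ' := A ∪ (B + τ), Λ'' := A ∪ (B − τ). Let f ≥ 0 be measurable on ℝ^d. If f + Λ is a tiling while f + Λ' and f + Λ'' are packings, then both f + Λ' and f + Λ'' are tilings. -/
open MeasureTheory Complex Set
open scoped Pointwise ENNReal RealInnerProductSpace

noncomputable section

/-!
Write `S_C(x) = ∑_{c∈C} f(x - c)`. The hypotheses say `S_A + S_B = 1`, `S_A + S_B(· - τ) ≤ 1` and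
`S_A + S_B(· + τ) ≤ 1` a.e. Since `S_A < ∞` a.e., the packings give `S_B(x ∓ τ) ≤ S_B(x)` a.e.;
substituting `x - τ` for `x` in the second (Lebesgue measure is translation invariant) gives
`S_B(x) ≤ S_B(x - τ)`, and symmetrically, so `S_B(· ∓ τ) = S_B` a.e. and both packings are tilings.
-/

section Translates

variable {E : Type*} [AddCommGroup E]

def translatesSum (f : E → ℝ) (L : Set E) (x : E) : ℝ≥0∞ :=
  ∑' l : L, ENNReal.ofReal (f (x - l))

theorem translatesSum_union (f : E → ℝ) {C D : Set E} (h : Disjoint C D) (x : E) :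
    translatesSum f (C ∪ D) x = translatesSum f C x + translatesSum f D x :=
  ENNReal.summable.tsum_union_disjoint (f := fun l => ENNReal.ofReal (f (x - l))) h ENNReal.summable

theorem translatesSum_image_add (f : E → ℝ) (B : Set E) (τ x : E) :
    translatesSum f ((fun b => b + τ) '' B) x = translatesSum f B (x - τ) := by
  rw [translatesSum, tsum_image (g := fun b => b + τ) (fun l => ENNReal.ofReal (f (x - l)))
    (add_left_injective τ).injOn, translatesSum]
  simp only [sub_add_eq_sub_sub_swap]

theorem translatesSum_image_sub (f : E → ℝ) (B : Set E) (τ x : E) :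
    translatesSum f ((fun b => b - τ) '' B) x = translatesSum f B (x + τ) := by
  simpa only [sub_eq_add_neg, neg_neg] using translatesSum_image_add f B (-τ) x

end Translates

section TilingPacking

variable {E : Type*} [NormedAddCommGroup E] [MeasureSpace E]

theorem isTiling_union_iff (f : E → ℝ) {C D : Set E} (h : Disjoint C D) :
    IsTiling f (C ∪ D) ↔ ∀ᵐ x, translatesSum f C x + translatesSum f D x = 1 := by
  simp only [← translatesSum_union f h]
  rfl

theorem isPacking_union_iff (f : E → ℝ) {C D : Set E} (h : Disjoint C D) :
    IsPacking f (C ∪ D) ↔ ∀ᵐ x, translatesSum f C x + translatesSum f D x ≤ 1 := by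
  simp only [← translatesSum_union f h]
  rfl

end TilingPacking

theorem ENNReal.le_of_add_eq_one_of_add_le_one {a b c : ℝ≥0∞} (h : a + b = 1)
    (h' : a + c ≤ 1) : c ≤ b :=
  ENNReal.le_of_add_le_add_left
    (ne_top_of_le_ne_top one_ne_top (h ▸ le_self_add)) (h'.trans_eq h.symm)

section Invariant

variable {G α : Type*} [AddGroup G] [MeasurableSpace G] [MeasurableAdd G] {μ : Measure G}
  [μ.IsAddRightInvariant] [PartialOrder α] {v : G → α} {τ : G}

theorem ae_comp_sub_eq_of_ae_le (hsub : ∀ᵐ x ∂μ, v (x - τ) ≤ v x) (hadd : ∀ᵐ x ∂μ, v (x + τ) ≤ v x) :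
    ∀ᵐ x ∂μ, v (x - τ) = v x := by
  have hshift : ∀ᵐ x ∂μ, v (x - τ + τ) ≤ v (x - τ) :=
    (measurePreserving_sub_right μ τ).quasiMeasurePreserving.ae hadd
  filter_upwards [hsub, hshift] with x hle hge
  exact hle.antisymm (by simpa using hge)

theorem ae_comp_add_eq_of_ae_le (hsub : ∀ᵐ x ∂μ, v (x - τ) ≤ v x) (hadd : ∀ᵐ x ∂μ, v (x + τ) ≤ v x) :
    ∀ᵐ x ∂μ, v (x + τ) = v x := by
  have hshift : ∀ᵐ x ∂μ, v (x + τ - τ) ≤ v (x + τ) :=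
    (measurePreserving_add_right μ τ).quasiMeasurePreserving.ae hsub
  filter_upwards [hadd, hshift] with x hle hge
  exact hle.antisymm (by simpa using hge)

theorem ae_add_comp_eq_one_of_ae_add_eq_one {u v : G → ℝ≥0∞} (h : ∀ᵐ x ∂μ, u x + v x = 1)
    (hsub : ∀ᵐ x ∂μ, u x + v (x - τ) ≤ 1) (hadd : ∀ᵐ x ∂μ, u x + v (x + τ) ≤ 1) :
    (∀ᵐ x ∂μ, u x + v (x - τ) = 1) ∧ ∀ᵐ x ∂μ, u x + v (x + τ) = 1 := by
  have hsub_le : ∀ᵐ x ∂μ, v (x - τ) ≤ v x := by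
    filter_upwards [h, hsub] with x hx hx' using ENNReal.le_of_add_eq_one_of_add_le_one hx hx'
  have hadd_le : ∀ᵐ x ∂μ, v (x + τ) ≤ v x := by
    filter_upwards [h, hadd] with x hx hx' using ENNReal.le_of_add_eq_one_of_add_le_one hx hx'
  constructor
  · filter_upwards [h, ae_comp_sub_eq_of_ae_le hsub_le hadd_le] with x hx hx' using hx' ▸ hx
  · filter_upwards [h, ae_comp_add_eq_of_ae_le hsub_le hadd_le] with x hx hx' using hx' ▸ hx

end Invariant

theorem stmt10_general {d : ℕ} (A B : Set (Ed d)) (τ : Ed d)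
    (h1 : Disjoint A B)
    (h2 : Disjoint A ((fun b => b + τ) '' B))
    (h3 : Disjoint A ((fun b => b - τ) '' B))
    (f : Ed d → ℝ)
    (ht : IsTiling f (A ∪ B))
    (hp1 : IsPacking f (A ∪ (fun b => b + τ) '' B))
    (hp2 : IsPacking f (A ∪ (fun b => b - τ) '' B)) :
    IsTiling f (A ∪ (fun b => b + τ) '' B) ∧
    IsTiling f (A ∪ (fun b => b - τ) '' B) := by
  rw [isTiling_union_iff f h1] at ht
  rw [isPacking_union_iff f h2] at hp1
  rw [isPacking_union_iff f h3] at hp2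
  rw [isTiling_union_iff f h2, isTiling_union_iff f h3]
  simp only [translatesSum_image_add, translatesSum_image_sub] at hp1 hp2 ⊢
  exact ae_add_comp_eq_one_of_ae_add_eq_one ht hp1 hp2

theorem stmt10 {d : ℕ} (A B : Set (Ed d)) (τ : Ed d)
    (h1 : Disjoint A B)
    (h2 : Disjoint A ((fun b => b + τ) '' B))
    (h3 : Disjoint A ((fun b => b - τ) '' B))
    (f : Ed d → ℝ) (hf : Measurable f) (hf0 : ∀ x, 0 ≤ f x)
    (ht : IsTiling f (A ∪ B))
    (hp1 : IsPacking f (A ∪ (fun b => b + τ) '' B))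
    (hp2 : IsPacking f (A ∪ (fun b => b - τ) '' B)) :
    IsTiling f (A ∪ (fun b => b + τ) '' B) ∧
    IsTiling f (A ∪ (fun b => b - τ) '' B) :=
  stmt10_general A B τ h1 h2 h3 f ht hp1 hp2
end
end

section
/- Let Ω = [−1/2, 1/2] × Σ ⊂ ℝ × ℝ^{d−1} with Σ bounded measurable of positive measure, and suppose Ω + Λ is a tiling of ℝ^d. Then for any two distinct points λ, λ' ∈ Λ, either λ'_1 − λ_1 is a non-zero integer, or the set (Σ + λ_2) ∩ (Σ + λ'_2) has measure zero in ℝ^{d−1}. -/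
open MeasureTheory Complex Set
open scoped Pointwise ENNReal RealInnerProductSpace

noncomputable section

/-!
Fix `y` in the second factor. By Fubini, for almost every `y` the tiling restricts to a tiling of
the line by the unit intervals `[-1/2, 1/2] + m₁`, one for each `m ∈ Λ` with `y ∈ Σ + m₂`. The
translates of such a line tiling are `1`-separated, and covering the points just to the right of
`t + 1/2` forces `t + 1` to be a translate whenever `t` is; hence distinct translates differ by
non-zero integers. For `y ∈ (Σ + λ₂) ∩ (Σ + λ'₂)` both `λ₁` and `λ'₁` are translates of this line
tiling, so if `λ'₁ - λ₁` is not a non-zero integer, all such `y` lie in the exceptional null set.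
-/

section LineTiling

variable {ι : Type*} {t : ι → ℝ}

lemma eq_of_abs_sub_lt_one_of_separated (hsep : Pairwise fun i j => 1 ≤ |t i - t j|) {i j : ι}
    (h : |t i - t j| < 1) : i = j :=
  by_contra fun hij => (hsep hij).not_gt h

lemma exists_eq_add_one_of_separated_of_ae_cover (hsep : Pairwise fun i j => 1 ≤ |t i - t j|)
    (hcov : ∀ᵐ x, ∃ i, |x - t i| ≤ 1 / 2) (i : ι) : ∃ j, t j = t i + 1 := by
  have right_neighbour : ∀ ε > 0, ∃ j, t i + 1 ≤ t j ∧ t j < t i + 1 + ε := by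
    intro ε hε
    obtain ⟨x, ⟨hx₁, hx₂⟩, j, hj⟩ := Measure.exists_mem_of_measure_ne_zero_of_ae
      (s := Ioo (t i + 1 / 2) (t i + 1 / 2 + ε)) (by simp [hε]) (ae_restrict_of_ae hcov)
    obtain ⟨hj₁, hj₂⟩ := abs_le.mp hj
    have hji : j ≠ i := by rintro rfl; linarith
    have hdist : 1 ≤ |t j - t i| := hsep hji
    rw [abs_of_pos (by linarith)] at hdist
    exact ⟨j, by linarith, by linarith⟩
  obtain ⟨j, hj₁, hj₂⟩ := right_neighbour (1 / 2) one_half_pos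
  refine ⟨j, le_antisymm (le_of_forall_pos_lt_add fun ε hε => ?_) hj₁⟩
  rcases le_or_gt ε (1 / 2) with hε' | hε'
  · obtain ⟨j', hj'₁, hj'₂⟩ := right_neighbour ε hε
    rwa [eq_of_abs_sub_lt_one_of_separated hsep (i := j) (j := j')
      (abs_lt.mpr ⟨by linarith, by linarith⟩)]
  · linarith

lemma exists_int_sub_eq_of_separated_of_ae_cover (hsep : Pairwise fun i j => 1 ≤ |t i - t j|)
    (hcov : ∀ᵐ x, ∃ i, |x - t i| ≤ 1 / 2) (i j : ι) : ∃ k : ℤ, t j - t i = k := by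
  have shift : ∀ (k : ℕ) (i : ι), ∃ j, t j = t i + k := by
    intro k
    induction k with
    | zero => exact fun i => ⟨i, by simp⟩
    | succ k ih =>
      intro i
      obtain ⟨j, hj⟩ := ih i
      obtain ⟨j', hj'⟩ := exists_eq_add_one_of_separated_of_ae_cover hsep hcov j
      exact ⟨j', by rw [hj', hj]; push_cast; ring⟩
  wlog hij : t i ≤ t j generalizing i j
  · obtain ⟨k, hk⟩ := this j i (le_of_not_ge hij)
    exact ⟨-k, by push_cast; linarith⟩
  obtain ⟨j', hj'⟩ := shift ⌊t j - t i⌋₊ i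
  have h₁ := Nat.floor_le (sub_nonneg.mpr hij)
  have h₂ := Nat.lt_floor_add_one (t j - t i)
  have hj'j := eq_of_abs_sub_lt_one_of_separated hsep (i := j') (j := j)
    (abs_lt.mpr ⟨by linarith, by linarith⟩)
  subst hj'j
  exact ⟨⌊t j' - t i⌋₊, by push_cast; linarith⟩

variable (t) in
def TilesByUnitInterval : Prop :=
  ∀ᵐ x, ∑' i, (Icc (-(1 / 2) : ℝ) (1 / 2)).indicator 1 (x - t i) = (1 : ℝ≥0∞)

lemma TilesByUnitInterval.separated (h : TilesByUnitInterval t) : Pairwise fun i j => 1 ≤ |t i - t j| := by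
  classical
  intro i j hij
  by_contra! hlt
  have hpos : volume (Ioo (max (t i) (t j) - 1 / 2) (min (t i) (t j) + 1 / 2)) ≠ 0 := by
    rw [Real.volume_Ioo, ne_eq, ENNReal.ofReal_eq_zero, not_le]
    linarith [max_sub_min_eq_abs' (t i) (t j)]
  obtain ⟨x, ⟨hx₁, hx₂⟩, hx⟩ := Measure.exists_mem_of_measure_ne_zero_of_ae hpos (ae_restrict_of_ae h)
  have hi : x - t i ∈ Icc (-(1 / 2) : ℝ) (1 / 2) :=
    ⟨by linarith [le_max_left (t i) (t j)], by linarith [min_le_left (t i) (t j)]⟩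
  have hj : x - t j ∈ Icc (-(1 / 2) : ℝ) (1 / 2) :=
    ⟨by linarith [le_max_right (t i) (t j)], by linarith [min_le_right (t i) (t j)]⟩
  have htwo := ENNReal.sum_le_tsum (f := fun k => (Icc (-(1 / 2) : ℝ) (1 / 2)).indicator 1 (x - t k))
    {i, j}
  rw [Finset.sum_pair hij, indicator_of_mem hi, indicator_of_mem hj, hx] at htwo
  norm_num at htwo

lemma TilesByUnitInterval.ae_cover (h : TilesByUnitInterval t) : ∀ᵐ x, ∃ i, |x - t i| ≤ 1 / 2 := by
  refine h.mono fun x hx => ?_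
  by_contra! hfar
  have hzero : ∀ i, (Icc (-(1 / 2) : ℝ) (1 / 2)).indicator (1 : ℝ → ℝ≥0∞) (x - t i) = 0 :=
    fun i => indicator_of_notMem (fun hi => (hfar i).not_ge (abs_le.mpr (mem_Icc.mp hi))) _
  rw [ENNReal.tsum_eq_zero.mpr hzero] at hx
  exact zero_ne_one hx

theorem TilesByUnitInterval.exists_int_ne_zero_sub_eq (h : TilesByUnitInterval t) {i j : ι}
    (hij : i ≠ j) :
    ∃ k : ℤ, k ≠ 0 ∧ t j - t i = k := by
  have hsep := h.separated
  obtain ⟨k, hk⟩ := exists_int_sub_eq_of_separated_of_ae_cover hsep h.ae_cover i j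
  refine ⟨k, fun hk0 => ?_, hk⟩
  have hdist : 1 ≤ |t i - t j| := hsep hij
  rw [abs_sub_comm, hk, hk0] at hdist
  norm_num at hdist

end LineTiling

lemma ae_ae_of_ae_prod_swap {α β : Type*} [MeasurableSpace α] [MeasurableSpace β]
    {μ : Measure α} {ν : Measure β} [SFinite μ] [SFinite ν] {p : α × β → Prop}
    (h : ∀ᵐ z ∂μ.prod ν, p z) : ∀ᵐ y ∂ν, ∀ᵐ x ∂μ, p (x, y) :=
  Measure.ae_ae_of_ae_prod (Measure.measurePreserving_swap.quasiMeasurePreserving.ae h)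

lemma tsum_ofReal_indicator_prod_sub {α E : Type*} [AddGroup α] [AddGroup E] (I : Set α)
    (S : Set E) (L : Set (α × E)) (x : α) (y : E) :
    ∑' m : L, ENNReal.ofReal ((I ×ˢ S).indicator (fun _ => (1 : ℝ)) ((x, y) - m)) =
      ∑' m : {m : L | y - (m : α × E).2 ∈ S}, I.indicator 1 (x - (m : α × E).1) := by
  rw [tsum_subtype {m : L | y - (m : α × E).2 ∈ S} fun m => I.indicator 1 (x - (m : α × E).1)]
  congr 1 with m
  by_cases hm : y - (m : α × E).2 ∈ S <;> by_cases hx : x - (m : α × E).1 ∈ I <;>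
    simp [hm, hx]

theorem stmt13_general {n : ℕ} (S : Set (Ed n)) (L : Set (ℝ × Ed n))
    (htile : IsTiling
      (Set.indicator ((Set.Icc (-(1/2) : ℝ) (1/2)) ×ˢ S) (fun _ => (1 : ℝ))) L) :
    ∀ l ∈ L, ∀ l' ∈ L, l ≠ l' →
      (∃ k : ℤ, k ≠ 0 ∧ l'.1 - l.1 = (k : ℝ)) ∨
      volume (((fun y => y + l.2) '' S) ∩ ((fun y => y + l'.2) '' S)) = 0 := by
  intro l hl l' hl' hne
  rw [IsTiling, Measure.volume_eq_prod] at htile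
  refine or_iff_not_imp_left.mpr fun hnot =>
    measure_mono_null (fun y hy => ?_) (ae_iff.mp (ae_ae_of_ae_prod_swap htile))
  simp only [image_add_right, ← sub_eq_add_neg, mem_inter_iff, mem_preimage] at hy
  intro hfiber
  simp only [tsum_ofReal_indicator_prod_sub] at hfiber
  exact hnot (TilesByUnitInterval.exists_int_ne_zero_sub_eq hfiber
    (i := ⟨⟨l, hl⟩, hy.1⟩) (j := ⟨⟨l', hl'⟩, hy.2⟩) (by simpa using hne))

theorem stmt13 {n : ℕ} (S : Set (Ed n)) (hB : Bornology.IsBounded S)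
    (hM : MeasurableSet S) (hpos : 0 < volume S) (L : Set (ℝ × Ed n))
    (htile : IsTiling
      (Set.indicator ((Set.Icc (-(1/2) : ℝ) (1/2)) ×ˢ S) (fun _ => (1 : ℝ))) L) :
    ∀ l ∈ L, ∀ l' ∈ L, l ≠ l' →
      (∃ k : ℤ, k ≠ 0 ∧ l'.1 - l.1 = (k : ℝ)) ∨
      volume (((fun y => y + l.2) '' S) ∩ ((fun y => y + l'.2) '' S)) = 0 :=
  stmt13_general S L htile
end
end

section
/- Let Ω = [−1/2, 1/2] × Σ ⊂ ℝ × ℝ^{d−1} with Σ bounded measurable of positive measure. If Ω admits a spectrum Λ contained in ℤ × ℝ^{d−1}, then for each k ∈ ℤ, the set Γ_k := {γ ∈ ℝ^{d−1} : (k, γ) ∈ Λ} is a spectrum for Σ. -/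
open MeasureTheory Complex Set
open scoped Pointwise ENNReal RealInnerProductSpace

noncomputable section

/-- The exponential `e_λ` on the product space `ℝ × ℝ^{d-1}`. -/
def expP {n : ℕ} (l x : ℝ × Ed n) : ℂ :=
  Complex.exp (2 * Real.pi * Complex.I * Complex.ofReal (l.1 * x.1 + (inner ℝ l.2 x.2 : ℝ)))

/-- `Λ` is a spectrum for `Ω ⊆ ℝ × ℝ^{d-1}`. -/
def IsSpectrumP {n : ℕ} (Om L : Set (ℝ × Ed n)) : Prop :=
  (∀ l ∈ L, ∀ m ∈ L, l ≠ m →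
    ∫ x in Om, expP l x * (starRingEnd ℂ) (expP m x) = 0) ∧
  ∀ f : ℝ × Ed n → ℂ, MemLp f 2 (volume.restrict Om) →
    (∀ l ∈ L, ∫ x in Om, f x * (starRingEnd ℂ) (expP l x) = 0) →
    f =ᵐ[volume.restrict Om] 0

/-! Since the first factor of `Ω` is an interval of length one and `Λ ⊆ ℤ × ℝ^{d-1}`, every
`e_(j,γ)` splits as `e_j ⊗ e_γ` with `∫_{-1/2}^{1/2} e_{k-j} = δ_{kj}`. Hence
`⟨e_k ⊗ g, e_(j,γ)⟩_{L²(Ω)} = δ_{kj} ⟨g, e_γ⟩_{L²(Σ)}`. With `g = e_γ'` this gives the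
orthogonality of `E(Γ_k)`; and if `g ⊥ E(Γ_k)` then `e_k ⊗ g ⊥ E(Λ)`, so `e_k ⊗ g = 0` by
completeness of `E(Λ)`, whence `g = 0`. -/

section

open Real FourierTransform

lemma fourierChar_mul_conj (a b : ℝ) : (𝐞 a : ℂ) * starRingEnd ℂ (𝐞 b : ℂ) = 𝐞 (a - b) := by
  rw [← Circle.coe_inv_eq_conj, ← AddChar.map_neg_eq_inv, ← Circle.coe_mul,
    ← AddChar.map_add_eq_mul, sub_eq_add_neg]

lemma expP_eq_fourierChar_mul_expF {d : ℕ} (l x : ℝ × Ed d) :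
    expP l x = 𝐞 (l.1 * x.1) * expF l.2 x.2 := by
  rw [expP, expF, Real.fourierChar_apply, ← Complex.exp_add]; push_cast; ring_nf

lemma setIntegral_Icc_fourierChar_int_mul (j : ℤ) :
    ∫ t in Icc (-(1/2) : ℝ) (1/2), (𝐞 (j * t) : ℂ) = if j = 0 then 1 else 0 := by
  split_ifs with hj
  · simp [hj, Real.volume_real_Icc]; norm_num
  · have hc : 2 * π * I * j ≠ 0 := by simp [Real.pi_ne_zero, hj]
    simp_rw [Real.fourierChar_apply, show ∀ t : ℝ, ((2 * π * (j * t) : ℝ) : ℂ) * I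
      = 2 * π * I * j * t from fun t => by push_cast; ring]
    rw [integral_Icc_eq_integral_Ioc, ← intervalIntegral.integral_of_le (by norm_num),
      integral_exp_mul_complex hc, sub_eq_zero.mpr, zero_div]
    rw [show 2 * π * I * j * ((1/2 : ℝ) : ℂ) = 2 * π * I * j * ((-(1/2) : ℝ) : ℂ) + j * (2 * π * I)
      by push_cast; ring, Complex.exp_add, Complex.exp_int_mul_two_pi_mul_I, mul_one]

lemma setIntegral_Icc_prod_fourierChar_mul_conj_expP {d : ℕ} (S : Set (Ed d)) (g : Ed d → ℂ)
    (k j : ℤ) (γ : Ed d) :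
    ∫ z in Icc (-(1/2) : ℝ) (1/2) ×ˢ S, 𝐞 (k * z.1) * g z.2 * starRingEnd ℂ (expP ((j : ℝ), γ) z)
      = if k = j then ∫ x in S, g x * starRingEnd ℂ (expF γ x) else 0 := by
  have hsplit : ∀ z : ℝ × Ed d, 𝐞 (k * z.1) * g z.2 * starRingEnd ℂ (expP ((j : ℝ), γ) z)
      = 𝐞 (((k - j : ℤ) : ℝ) * z.1) * (g z.2 * starRingEnd ℂ (expF γ z.2)) := by
    intro z
    rw [expP_eq_fourierChar_mul_expF, map_mul (starRingEnd ℂ), mul_mul_mul_comm,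
      fourierChar_mul_conj, ← sub_mul, ← Int.cast_sub]
  rw [integral_congr_ae (.of_forall hsplit), Measure.volume_eq_prod,
    setIntegral_prod_mul (fun t : ℝ => (𝐞 (((k - j : ℤ) : ℝ) * t) : ℂ))
      (fun x => g x * starRingEnd ℂ (expF γ x)),
    setIntegral_Icc_fourierChar_int_mul]
  simp only [sub_eq_zero, ite_mul, one_mul, zero_mul]

lemma memLp_fourierChar_int_mul_comp_snd {d : ℕ} {S : Set (Ed d)} {g : Ed d → ℂ}
    (hg : MemLp g 2 (volume.restrict S)) (k : ℤ) :
    MemLp (fun z : ℝ × Ed d => 𝐞 (k * z.1) * g z.2) 2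
      (volume.restrict (Icc (-(1/2) : ℝ) (1/2) ×ˢ S)) := by
  rw [Measure.volume_eq_prod, ← Measure.prod_restrict]
  have hg' := hg.comp_snd (volume.restrict (Icc (-(1/2) : ℝ) (1/2)))
  refine hg'.of_le ?_ (.of_forall fun z => ?_)
  · have hchar : Continuous fun z : ℝ × Ed d => (𝐞 (k * z.1) : ℂ) := by fun_prop
    exact hchar.aestronglyMeasurable.mul hg'.aestronglyMeasurable
  · rw [norm_mul, Circle.norm_coe, one_mul]

lemma ae_eq_zero_of_fourierChar_int_mul_comp_snd {d : ℕ} {S : Set (Ed d)} {g : Ed d → ℂ} {k : ℤ}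
    (h : (fun z : ℝ × Ed d => (𝐞 (k * z.1) : ℂ) * g z.2)
      =ᵐ[volume.restrict (Icc (-(1/2) : ℝ) (1/2) ×ˢ S)] 0) :
    g =ᵐ[volume.restrict S] 0 := by
  rw [Measure.volume_eq_prod, ← Measure.prod_restrict] at h
  have : (ae (volume.restrict (Icc (-(1/2) : ℝ) (1/2)))).NeBot := by
    rw [ae_neBot, Ne, Measure.restrict_eq_zero, Real.volume_Icc]; norm_num
  obtain ⟨t, ht⟩ := (Measure.ae_ae_of_ae_prod h).exists
  filter_upwards [ht] with x hx
  simpa using hx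

end

theorem stmt16_general {n : ℕ} (S : Set (Ed n)) (L : Set (ℝ × Ed n))
    (hspec : IsSpectrumP ((Set.Icc (-(1/2) : ℝ) (1/2)) ×ˢ S) L)
    (hZ : ∀ l ∈ L, ∃ k : ℤ, l.1 = (k : ℝ)) :
    ∀ k : ℤ, IsSpectrum S {γ : Ed n | ((k : ℝ), γ) ∈ L} := by
  intro k
  refine ⟨fun γ hγ γ' hγ' hne => ?_, fun f hf hf0 => ?_⟩
  · have h := hspec.1 _ hγ _ hγ' (by simpa using hne)
    simp only [expP_eq_fourierChar_mul_expF ((k : ℝ), γ)] at h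
    rwa [setIntegral_Icc_prod_fourierChar_mul_conj_expP, if_pos rfl] at h
  · refine ae_eq_zero_of_fourierChar_int_mul_comp_snd
      (hspec.2 _ (memLp_fourierChar_int_mul_comp_snd hf k) fun l hl => ?_)
    obtain ⟨j, hj⟩ := hZ l hl
    obtain ⟨_, γ⟩ := l
    subst hj
    rw [setIntegral_Icc_prod_fourierChar_mul_conj_expP]
    split_ifs with hkj
    · subst hkj
      exact hf0 γ hl
    · rfl

theorem stmt16 {n : ℕ} (S : Set (Ed n)) (hB : Bornology.IsBounded S)
    (hM : MeasurableSet S) (hpos : 0 < volume S) (L : Set (ℝ × Ed n))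
    (hspec : IsSpectrumP ((Set.Icc (-(1/2) : ℝ) (1/2)) ×ˢ S) L)
    (hZ : ∀ l ∈ L, ∃ k : ℤ, l.1 = (k : ℝ)) :
    ∀ k : ℤ, IsSpectrum S {γ : Ed n | ((k : ℝ), γ) ∈ L} :=
  stmt16_general S L hspec hZ
end
end

section
/- Let Ω = [−1/2, 1/2] × Σ ⊂ ℝ × ℝ^{d−1} with Σ bounded measurable of positive measure, and suppose Ω + Λ is a tiling with Λ ⊆ ℤ × ℝ^{d−1}. Then for each k ∈ ℤ, the set Γ_k := {γ ∈ ℝ^{d−1} : (k, γ) ∈ Λ} satisfies that Σ + Γ_k is a tiling of ℝ^{d−1}. -/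
open MeasureTheory Complex Set
open scoped Pointwise ENNReal RealInnerProductSpace

noncomputable section

/-!
For almost every height `t`, the horizontal line `{t} × ℝ^{d-1}` meets the tiling `Ω + Λ`
in a tiling of `ℝ^{d-1}`. If `|t - k| < 1/2`, the only translates `Ω + λ` that meet this line
are those with `λ₁ = k`, since `λ₁` is an integer; their sections are exactly `Σ + Γ_k`.
Such a good `t` exists because the interval `(k - 1/2, k + 1/2)` has positive length.
-/

theorem tsum_ofReal_indicator_prod_sub_eq_tsum_slice {E F : Type*} [AddGroup E] [AddGroup F]
    {A : Set E} {S : Set F} {L : Set (E × F)} {t a : E} (ha : t - a ∈ A)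
    (hL : ∀ l ∈ L, t - l.1 ∈ A → l.1 = a) (y : F) :
    ∑' l : L, ENNReal.ofReal ((A ×ˢ S).indicator (fun _ => (1 : ℝ)) ((t, y) - l)) =
      ∑' γ : {γ : F | (a, γ) ∈ L}, ENNReal.ofReal (S.indicator (fun _ => (1 : ℝ)) (y - γ)) := by
  let i : {γ : F | (a, γ) ∈ L} → L := fun γ => ⟨(a, γ), γ.2⟩
  have hinj : Function.Injective i := fun γ δ h =>
    Subtype.ext (congrArg (fun l : L => (l : E × F).2) h)
  have hsupp : Function.support
      (fun l : L => ENNReal.ofReal ((A ×ˢ S).indicator (fun _ => (1 : ℝ)) ((t, y) - l))) ⊆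
      range i := by
    intro l hl
    have hmem : (t, y) - (l : E × F) ∈ A ×ˢ S := by
      by_contra h
      simp [indicator_of_notMem h] at hl
    have hla : (l : E × F).1 = a := hL l l.2 hmem.1
    exact ⟨⟨(l : E × F).2, by simp [← hla]⟩, Subtype.ext (Prod.ext hla.symm rfl)⟩
  rw [← hinj.tsum_eq hsupp]
  refine tsum_congr fun γ => ?_
  by_cases hS : y - (γ : F) ∈ S <;> simp [i, hS, ha]

theorem int_eq_of_sub_mem_Icc {t : ℝ} {k m : ℤ} (ht : t ∈ Ioo (k - 1/2 : ℝ) (k + 1/2))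
    (hm : t - m ∈ Icc (-(1/2) : ℝ) (1/2)) : m = k := by
  have hlt : (m : ℝ) < k + 1 := by linarith [ht.2, hm.1]
  have hgt : (k : ℝ) - 1 < m := by linarith [ht.1, hm.2]
  have : m < k + 1 := by exact_mod_cast hlt
  have : k - 1 < m := by exact_mod_cast hgt
  omega

theorem stmt17_general {n : ℕ} (S : Set (Ed n)) (L : Set (ℝ × Ed n))
    (htile : IsTiling
      (Set.indicator ((Set.Icc (-(1/2) : ℝ) (1/2)) ×ˢ S) (fun _ => (1 : ℝ))) L)
    (hZ : ∀ l ∈ L, ∃ k : ℤ, l.1 = (k : ℝ)) :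
    ∀ k : ℤ, IsTiling (Set.indicator S (fun _ => (1 : ℝ)))
      {γ : Ed n | ((k : ℝ), γ) ∈ L} := by
  intro k
  obtain ⟨t, ht, hty⟩ := Measure.exists_mem_of_measure_ne_zero_of_ae
    (s := Ioo ((k : ℝ) - 1/2) (k + 1/2)) (by simp [Real.volume_Ioo])
    (ae_restrict_of_ae (Measure.ae_ae_of_ae_prod htile))
  have hk : t - k ∈ Icc (-(1/2) : ℝ) (1/2) := ⟨by linarith [ht.1], by linarith [ht.2]⟩
  have hL : ∀ l ∈ L, t - l.1 ∈ Icc (-(1/2) : ℝ) (1/2) → l.1 = k := by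
    rintro l hl hmem
    obtain ⟨m, hm⟩ := hZ l hl
    rw [hm] at hmem ⊢
    exact congrArg _ (int_eq_of_sub_mem_Icc ht hmem)
  filter_upwards [hty] with y hy
  rwa [← tsum_ofReal_indicator_prod_sub_eq_tsum_slice hk hL]

theorem stmt17 {n : ℕ} (S : Set (Ed n)) (hB : Bornology.IsBounded S)
    (hM : MeasurableSet S) (hpos : 0 < volume S) (L : Set (ℝ × Ed n))
    (htile : IsTiling
      (Set.indicator ((Set.Icc (-(1/2) : ℝ) (1/2)) ×ˢ S) (fun _ => (1 : ℝ))) L)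
    (hZ : ∀ l ∈ L, ∃ k : ℤ, l.1 = (k : ℝ)) :
    ∀ k : ℤ, IsTiling (Set.indicator S (fun _ => (1 : ℝ)))
      {γ : Ed n | ((k : ℝ), γ) ∈ L} :=
  stmt17_general S L htile hZ
end
end

section
/- Let Ω = I × Σ be a cylindric set in ℝ^d (d ≥ 2), where I ⊂ ℝ is a bounded interval of positive length and Σ ⊂ ℝ^{d−1} is bounded measurable of positive measure. Then Ω is a spectral set in ℝ^d if and only if Σ is a spectral set in ℝ^{d−1}. -/
open MeasureTheory Complex Set
open scoped Pointwise ENNReal RealInnerProductSpace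

noncomputable section

/-!
Up to a null set `I = (a, b]`. On `Ω = (a, b] × Σ` the exponentials factorise, so that
`∫_Ω e_l ē_m = F(l₁ - m₁) · ∫_Σ e_{l₂} ē_{m₂}` with `F(τ) = ∫_a^b e^{2πiτt} dt`, and `F(τ) = 0`
exactly when `τ ∈ (b - a)⁻¹ℤ \ {0}`.

If `G` is a spectrum of `Σ`, then `(b - a)⁻¹ℤ × G` is a spectrum of `Ω`: orthogonality is read off
the factorisation, and a function orthogonal to all these exponentials has, for almost every
`y ∈ Σ`, vanishing Fourier coefficients in `t`, by Fubini and the completeness of `E(G)`.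

Conversely let `L` be a spectrum of `Ω`. Exponentials `e_{p₂}`, `e_{q₂}` with `p, q ∈ L` and
`p₁ ≢ q₁ mod (b - a)⁻¹` are orthogonal on `Σ`. Pick one representative `σ` of each class and let
`G` be the union of the fibres `{m | (σ, m) ∈ L}`; it is orthogonal. For `p ∈ L` with `p₁ ≡ σ`,
let `u` be the component of `e_{p₂}` orthogonal to the fibre over `σ`: then `e_σ ⊗ u` is orthogonal
to every `e_q`, `q ∈ L`, hence zero. So every `e_{p₂}` lies in the closed span of `E(G)`, and a
function `f` orthogonal to `E(G)` gives `1 ⊗ f` orthogonal to `E(L)`, whence `f = 0`.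
-/

namespace CylinderSpectral

open Submodule
open scoped ComplexConjugate InnerProductSpace

variable {n : ℕ}

def expR (τ t : ℝ) : ℂ := Complex.exp (2 * Real.pi * Complex.I * ((τ * t : ℝ) : ℂ))

lemma expR_mul_conj (τ σ t : ℝ) : expR τ t * conj (expR σ t) = expR (τ - σ) t := by
  rw [expR, expR, expR, ← Complex.exp_conj, ← Complex.exp_add]
  congr 1
  simp only [map_mul, Complex.conj_I, Complex.conj_ofNat, Complex.conj_ofReal]
  push_cast
  ring

lemma norm_expR (τ t : ℝ) : ‖expR τ t‖ = 1 := by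
  rw [expR, Complex.norm_exp]
  simp [Complex.mul_re]

lemma continuous_expR (τ : ℝ) : Continuous (expR τ) := by
  unfold expR
  fun_prop

lemma fourier_neg_coe_eq_conj_expR {T : ℝ} (k : ℤ) (t : ℝ) :
    fourier (-k) (t : AddCircle T) = conj (expR (k / T) t) := by
  rw [fourier_coe_apply, expR, ← Complex.exp_conj]
  congr 1
  simp only [map_mul, Complex.conj_I, Complex.conj_ofNat, Complex.conj_ofReal]
  push_cast
  ring

lemma norm_expF {d : ℕ} (l x : Ed d) : ‖expF l x‖ = 1 := by
  rw [expF, Complex.norm_exp]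
  simp [Complex.mul_re]

lemma continuous_expF {d : ℕ} (l : Ed d) : Continuous (expF l) := by
  unfold expF
  fun_prop

lemma expP_eq_expR_mul_expF (l x : ℝ × Ed n) : expP l x = expR l.1 x.1 * expF l.2 x.2 := by
  rw [expP, expR, expF, ← Complex.exp_add]
  congr 1
  push_cast
  ring

lemma continuous_expP (l : ℝ × Ed n) : Continuous (expP l) := by
  unfold expP
  fun_prop

lemma norm_expP (l x : ℝ × Ed n) : ‖expP l x‖ = 1 := by
  rw [expP_eq_expR_mul_expF, norm_mul, norm_expR, norm_expF, one_mul]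

def expIntegralIoc (a b τ : ℝ) : ℂ := ∫ t in Ioc a b, expR τ t

lemma expIntegralIoc_eq_zero_iff {a b : ℝ} (hab : a < b) (τ : ℝ) :
    expIntegralIoc a b τ = 0 ↔ τ ≠ 0 ∧ (τ : AddCircle (b - a)⁻¹) = 0 := by
  rw [expIntegralIoc, ← intervalIntegral.integral_of_le hab.le]
  rcases eq_or_ne τ 0 with rfl | hτ
  · simp [expR, sub_eq_zero, hab.ne']
  have hc : 2 * Real.pi * Complex.I * τ ≠ 0 := by simp [Real.pi_ne_zero, hτ]
  have hexp : ∀ t : ℝ, expR τ t = Complex.exp (2 * Real.pi * Complex.I * τ * t) := by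
    intro t
    rw [expR]
    push_cast
    ring_nf
  simp_rw [hexp, integral_exp_mul_complex hc, div_eq_zero_iff, hc, or_false, sub_eq_zero,
    Complex.exp_eq_exp_iff_exists_int, AddCircle.coe_eq_zero_iff, ne_eq, hτ, not_false_eq_true,
    true_and, zsmul_eq_mul]
  have hba : b - a ≠ 0 := sub_ne_zero.mpr hab.ne'
  refine exists_congr fun k => ⟨fun h => ?_, fun h => ?_⟩
  · have h' : (2 * Real.pi * Complex.I) * ((τ * (b - a) - k : ℝ) : ℂ) = 0 := by
      push_cast
      linear_combination h
    have := (mul_eq_zero.mp h').resolve_left (by simp [Real.pi_ne_zero])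
    rw [Complex.ofReal_eq_zero, sub_eq_zero] at this
    field_simp
    linarith
  · have hba' : (b : ℂ) - a ≠ 0 := by exact_mod_cast hba
    rw [← h]
    push_cast
    field_simp
    ring

lemma mem_orthogonal_span_iff {𝕜 E : Type*} [RCLike 𝕜] [NormedAddCommGroup E]
    [InnerProductSpace 𝕜 E] {s : Set E} {x : E} :
    x ∈ (span 𝕜 s)ᗮ ↔ ∀ v ∈ s, ⟪v, x⟫_𝕜 = 0 := by
  refine ⟨fun h v hv => (mem_orthogonal _ _).mp h v (subset_span hv), fun h => ?_⟩
  rw [← span_singleton_le_iff_mem, ← isOrtho_iff_le, isOrtho_comm, isOrtho_iff_le, span_le]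
  exact fun v hv => mem_orthogonal_singleton_iff_inner_left.mpr (h v hv)

lemma eq_of_le_of_orthogonal_inf_eq_bot {𝕜 E : Type*} [RCLike 𝕜] [NormedAddCommGroup E]
    [InnerProductSpace 𝕜 E] {K K' : Submodule 𝕜 E} [K.HasOrthogonalProjection] (h : K ≤ K')
    (h' : Kᗮ ⊓ K' = ⊥) : K = K' := by
  simpa [h'] using sup_orthogonal_inf_of_hasOrthogonalProjection h

section Product

variable {α β : Type*} [MeasurableSpace α] [MeasurableSpace β] {μ : Measure α} {ν : Measure β}

lemma ae_eq_zero_of_mul_prod_ae_eq_zero {R : Type*} [MulZeroClass R] [NoZeroDivisors R]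
    [SFinite ν] (hμ : μ ≠ 0) {φ : α → R} (hφ : ∀ x, φ x ≠ 0) {u : β → R}
    (h : (fun z : α × β => φ z.1 * u z.2) =ᵐ[μ.prod ν] 0) : u =ᵐ[ν] 0 := by
  have : (ae μ).NeBot := ae_neBot.mpr hμ
  obtain ⟨x, hx⟩ := (Measure.ae_ae_of_ae_prod h).exists
  filter_upwards [hx] with y hy
  exact (mul_eq_zero.mp hy).resolve_left (hφ x)

lemma memLp_mul_comp_snd_of_norm_eq_one [IsFiniteMeasure μ] [SFinite ν] {p : ℝ≥0∞}
    {φ : α → ℂ} (hφ : AEStronglyMeasurable φ μ) (hφ1 : ∀ x, ‖φ x‖ = 1) {u : β → ℂ}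
    (hu : MemLp u p ν) : MemLp (fun z : α × β => φ z.1 * u z.2) p (μ.prod ν) :=
  (hu.comp_snd μ).congr_norm (hφ.comp_fst.mul hu.1.comp_snd)
    (ae_of_all _ fun z => by simp [hφ1])

lemma ae_memLp_two_section {E : Type*} [NormedAddCommGroup E] [SFinite μ] [SFinite ν]
    {f : α × β → E} (hf : MemLp f 2 (μ.prod ν)) : ∀ᵐ y ∂ν, MemLp (fun x => f (x, y)) 2 μ := by
  filter_upwards [hf.1.prodMk_right,
    ((memLp_two_iff_integrable_sq_norm hf.1).mp hf).prod_left_ae] with y hmeas hint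
  exact (memLp_two_iff_integrable_sq_norm hmeas).mpr hint

lemma ae_eq_zero_of_ae_section_ae_eq_zero {E : Type*} [NormedAddCommGroup E] [SFinite μ]
    [SFinite ν] {f : α × β → E} (hf : Integrable f (μ.prod ν))
    (h : ∀ᵐ y ∂ν, (fun x => f (x, y)) =ᵐ[μ] 0) : f =ᵐ[μ.prod ν] 0 := by
  have hnorm : ∫ z, ‖f z‖ ∂μ.prod ν = 0 := by
    rw [integral_prod_symm _ hf.norm]
    refine integral_eq_zero_of_ae ?_
    filter_upwards [h] with y hy
    rw [integral_eq_zero_of_ae (by filter_upwards [hy] with x hx; simp [hx]), Pi.zero_apply]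
  filter_upwards [(integral_eq_zero_iff_of_nonneg (fun _ => norm_nonneg _) hf.norm).mp hnorm]
    with z hz
  simpa using hz

end Product

section FourierSeries

variable {a b : ℝ} (hab : a < b)

lemma norm_sq_fourierCoeffOn_le {f : ℝ → ℂ} (hf : MemLp f 2 (volume.restrict (Ioc a b)))
    (k : ℤ) : ‖fourierCoeffOn hab f k‖ ^ 2 ≤ (b - a)⁻¹ * ∫ x in a..b, ‖f x‖ ^ 2 :=
  le_hasSum (hasSum_sq_fourierCoeffOn hab hf) k fun _ _ => sq_nonneg _

lemma ae_eq_zero_of_fourierCoeffOn_eq_zero {f : ℝ → ℂ}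
    (hf : MemLp f 2 (volume.restrict (Ioc a b))) (h : ∀ k, fourierCoeffOn hab f k = 0) :
    f =ᵐ[volume.restrict (Ioc a b)] 0 := by
  have hsum := hasSum_sq_fourierCoeffOn hab hf
  simp only [h, norm_zero, ne_eq, OfNat.ofNat_ne_zero, not_false_eq_true, zero_pow] at hsum
  have hint : ∫ x in Ioc a b, ‖f x‖ ^ 2 = 0 := by
    rw [← intervalIntegral.integral_of_le hab.le]
    simpa [sub_eq_zero, hab.ne'] using hasSum_zero.unique hsum
  filter_upwards [(integral_eq_zero_iff_of_nonneg (fun _ => sq_nonneg _)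
    ((memLp_two_iff_integrable_sq_norm hf.1).mp hf)).mp hint] with x hx
  simpa using hx

lemma fourierCoeffOn_eq_setIntegral_mul_conj_expR (f : ℝ → ℂ) (k : ℤ) :
    fourierCoeffOn hab f k = (b - a)⁻¹ * ∫ x in Ioc a b, f x * conj (expR (k / (b - a)) x) := by
  simp only [fourierCoeffOn_eq_integral, intervalIntegral.integral_of_le hab.le, smul_eq_mul,
    one_div, fourier_neg_coe_eq_conj_expR, mul_comm (conj _), Complex.real_smul]

lemma memLp_fourierCoeffOn_section {β : Type*} [MeasurableSpace β] {ν : Measure β} [SFinite ν]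
    {f : ℝ × β → ℂ} (hf : MemLp f 2 ((volume.restrict (Ioc a b)).prod ν)) (k : ℤ) :
    MemLp (fun y => fourierCoeffOn hab (fun x => f (x, y)) k) 2 ν := by
  have hmeas : AEStronglyMeasurable (fun y => fourierCoeffOn hab (fun x => f (x, y)) k) ν := by
    simp only [fourierCoeffOn_eq_setIntegral_mul_conj_expR hab]
    have hconj : AEStronglyMeasurable (fun x => conj (expR (k / (b - a)) x))
        (volume.restrict (Ioc a b)) :=
      (Complex.continuous_conj.comp (continuous_expR _)).aestronglyMeasurable
    exact ((hf.1.mul hconj.comp_fst).prod_swap.integral_prod_right').const_mul _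
  refine (memLp_two_iff_integrable_sq_norm hmeas).mpr ?_
  have hsq := (memLp_two_iff_integrable_sq_norm hf.1).mp hf
  refine Integrable.mono' (hsq.integral_prod_right.const_mul (b - a)⁻¹) (hmeas.norm.pow 2) ?_
  filter_upwards [ae_memLp_two_section hf] with y hy
  rw [Real.norm_of_nonneg (sq_nonneg _), ← intervalIntegral.integral_of_le hab.le]
  exact norm_sq_fourierCoeffOn_le hab hy k

end FourierSeries

section L2Exponentials

variable (S : Set (Ed n)) [IsFiniteMeasure (volume.restrict S)]

lemma memLp_expF (m : Ed n) : MemLp (expF m) 2 (volume.restrict S) :=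
  .of_bound (continuous_expF m).aestronglyMeasurable 1 (ae_of_all _ fun y => (norm_expF m y).le)

def expL (m : Ed n) : Lp ℂ 2 (volume.restrict S) := (memLp_expF S m).toLp (expF m)

lemma inner_expL (m : Ed n) (g : Lp ℂ 2 (volume.restrict S)) :
    ⟪expL S m, g⟫_ℂ = ∫ y in S, g y * conj (expF m y) := by
  rw [L2.inner_def]
  refine integral_congr_ae ?_
  filter_upwards [(memLp_expF S m).coeFn_toLp] with y hy
  rw [RCLike.inner_apply, expL, hy, mul_comm]

lemma inner_expL_toLp (m : Ed n) {f : Ed n → ℂ} (hf : MemLp f 2 (volume.restrict S)) :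
    ⟪expL S m, hf.toLp f⟫_ℂ = ∫ y in S, f y * conj (expF m y) := by
  rw [inner_expL]
  refine integral_congr_ae ?_
  filter_upwards [hf.coeFn_toLp] with y hy
  rw [hy]

lemma inner_expL_expL (l m : Ed n) :
    ⟪expL S m, expL S l⟫_ℂ = ∫ y in S, expF l y * conj (expF m y) :=
  inner_expL_toLp S m (memLp_expF S l)

end L2Exponentials

lemma volume_restrict_prod {α β : Type*} [MeasureSpace α] [MeasureSpace β]
    [SigmaFinite (volume : Measure α)] [SigmaFinite (volume : Measure β)] (s : Set α)
    (t : Set β) : volume.restrict (s ×ˢ t) = (volume.restrict s).prod (volume.restrict t) := by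
  rw [Measure.volume_eq_prod, Measure.prod_restrict]

lemma ae_eq_Ioc_of_Ioo_subset_of_subset_Icc {a b : ℝ} {I : Set ℝ} (hIoo : Ioo a b ⊆ I)
    (hIcc : I ⊆ Icc a b) : I =ᵐ[volume] Ioc a b :=
  (hIcc.eventuallyLE.trans Ioc_ae_eq_Icc.symm.le).antisymm
    (Ioo_ae_eq_Ioc.symm.le.trans hIoo.eventuallyLE)

lemma isSpectrumP_congr {Om Om' : Set (ℝ × Ed n)} (h : volume.restrict Om = volume.restrict Om')
    (L : Set (ℝ × Ed n)) : IsSpectrumP Om L ↔ IsSpectrumP Om' L := by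
  simp only [IsSpectrumP, h]

lemma setIntegral_expR_mul_mul_conj_expP (s : Set ℝ) (S : Set (Ed n)) (τ : ℝ) (u : Ed n → ℂ)
    (l : ℝ × Ed n) :
    ∫ z in s ×ˢ S, expR τ z.1 * u z.2 * conj (expP l z)
      = (∫ t in s, expR (τ - l.1) t) * ∫ y in S, u y * conj (expF l.2 y) := by
  have h : ∀ z : ℝ × Ed n, expR τ z.1 * u z.2 * conj (expP l z)
      = expR (τ - l.1) z.1 * (u z.2 * conj (expF l.2 z.2)) := fun z => by
    rw [expP_eq_expR_mul_expF, map_mul, ← expR_mul_conj]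
    ring
  simp_rw [h]
  rw [Measure.volume_eq_prod]
  exact setIntegral_prod_mul (expR (τ - l.1)) (fun y => u y * conj (expF l.2 y)) s S

lemma setIntegral_expP_mul_conj_expP (a b : ℝ) (S : Set (Ed n)) (l m : ℝ × Ed n) :
    ∫ z in Ioc a b ×ˢ S, expP l z * conj (expP m z)
      = expIntegralIoc a b (l.1 - m.1) * ∫ y in S, expF l.2 y * conj (expF m.2 y) := by
  rw [show expP l = fun z => expR l.1 z.1 * expF l.2 z.2 from funext (expP_eq_expR_mul_expF l)]
  exact setIntegral_expR_mul_mul_conj_expP _ _ _ _ _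

lemma integral_fourierCoeffOn_section_mul_conj_expF {a b : ℝ} (hab : a < b)
    {ν : Measure (Ed n)} [SFinite ν] {f : ℝ × Ed n → ℂ}
    (hf : Integrable f ((volume.restrict (Ioc a b)).prod ν)) (k : ℤ) (m : Ed n) :
    ∫ y, fourierCoeffOn hab (fun x => f (x, y)) k * conj (expF m y) ∂ν
      = (b - a)⁻¹ * ∫ z, f z * conj (expP (k / (b - a), m) z)
          ∂(volume.restrict (Ioc a b)).prod ν := by
  have hint : Integrable (fun z => f z * conj (expP (k / (b - a), m) z))
      ((volume.restrict (Ioc a b)).prod ν) :=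
    hf.mul_bdd (c := 1) (Complex.continuous_conj.comp (continuous_expP _)).aestronglyMeasurable
      (ae_of_all _ fun z => by simp [norm_expP])
  rw [integral_prod_symm _ hint, ← integral_const_mul]
  refine integral_congr_ae (ae_of_all _ fun y => ?_)
  simp only [fourierCoeffOn_eq_setIntegral_mul_conj_expR hab, expP_eq_expR_mul_expF, map_mul,
    ← mul_assoc, integral_mul_const]

section Forward

variable {a b : ℝ} (hab : a < b) {S : Set (Ed n)} [IsFiniteMeasure (volume.restrict S)]
  {L : Set (ℝ × Ed n)} (hL : IsSpectrumP (Ioc a b ×ˢ S) L)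
include hL

lemma inner_expL_eq_zero_of_expIntegralIoc_ne_zero {p q : ℝ × Ed n} (hp : p ∈ L) (hq : q ∈ L)
    (hpq : p ≠ q) (hc : expIntegralIoc a b (p.1 - q.1) ≠ 0) :
    ⟪expL S q.2, expL S p.2⟫_ℂ = 0 := by
  have h := hL.1 p hp q hq hpq
  rw [setIntegral_expP_mul_conj_expP] at h
  rw [inner_expL_expL]
  exact (mul_eq_zero.mp h).resolve_left hc

include hab

lemma inner_expL_eq_zero_of_fst_eq {p q : ℝ × Ed n} (hp : p ∈ L) (hq : q ∈ L) (hpq : p ≠ q)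
    (h : p.1 = q.1) : ⟪expL S q.2, expL S p.2⟫_ℂ = 0 :=
  inner_expL_eq_zero_of_expIntegralIoc_ne_zero hL hp hq hpq
    (by simp [h, expIntegralIoc_eq_zero_iff hab])

lemma inner_expL_eq_zero_of_coe_fst_ne {p q : ℝ × Ed n} (hp : p ∈ L) (hq : q ∈ L)
    (h : (p.1 : AddCircle (b - a)⁻¹) ≠ q.1) : ⟪expL S q.2, expL S p.2⟫_ℂ = 0 :=
  inner_expL_eq_zero_of_expIntegralIoc_ne_zero hL hp hq (by rintro rfl; exact h rfl)
    (by rw [ne_eq, expIntegralIoc_eq_zero_iff hab, AddCircle.coe_sub, sub_eq_zero]; tauto)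

lemma eq_zero_of_forall_expIntegralIoc_mul_inner_eq_zero (σ : ℝ)
    (u : Lp ℂ 2 (volume.restrict S))
    (h : ∀ q ∈ L, expIntegralIoc a b (σ - q.1) * ⟪expL S q.2, u⟫_ℂ = 0) : u = 0 := by
  have hmem := memLp_mul_comp_snd_of_norm_eq_one (μ := volume.restrict (Ioc a b))
    (continuous_expR σ).aestronglyMeasurable (norm_expR σ) (Lp.memLp u)
  rw [← volume_restrict_prod] at hmem
  have h0 := hL.2 _ hmem fun q hq => by
    rw [setIntegral_expR_mul_mul_conj_expP, ← inner_expL]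
    exact h q hq
  rw [volume_restrict_prod] at h0
  refine Lp.eq_zero_iff_ae_eq_zero.mpr
    (ae_eq_zero_of_mul_prod_ae_eq_zero (φ := expR σ) ?_ (fun _ => Complex.exp_ne_zero _) h0)
  simp [Measure.restrict_eq_zero, hab]

lemma expL_mem_closure_span_fiber {p : ℝ × Ed n} (hp : p ∈ L) {σ : ℝ}
    (hσ : (σ : AddCircle (b - a)⁻¹) = p.1) :
    expL S p.2 ∈ (span ℂ (expL S '' {m | (σ, m) ∈ L})).topologicalClosure := by
  set K := (span ℂ (expL S '' {m | (σ, m) ∈ L})).topologicalClosure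
  refine (eq_of_le_of_orthogonal_inf_eq_bot (le_sup_left : K ≤ K ⊔ span ℂ {expL S p.2}) ?_).ge
    (mem_sup_right (mem_span_singleton_self _))
  refine eq_bot_iff.mpr fun u ⟨huK, hu⟩ => (mem_bot ℂ).mpr ?_
  refine eq_zero_of_forall_expIntegralIoc_mul_inner_eq_zero hab hL σ u fun q hq => ?_
  by_cases hqσ : q.1 = σ
  · have hqK : expL S q.2 ∈ K :=
      le_topologicalClosure _ (subset_span ⟨q.2, by simpa [← hqσ] using hq, rfl⟩)
    rw [(mem_orthogonal _ _).mp huK _ hqK, mul_zero]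
  by_cases hcoe : (q.1 : AddCircle (b - a)⁻¹) = σ
  · rw [(expIntegralIoc_eq_zero_iff hab _).mpr
      ⟨sub_ne_zero.mpr (Ne.symm hqσ), by rw [AddCircle.coe_sub, hcoe, sub_self]⟩, zero_mul]
  have hq_orth : expL S q.2 ∈ (K ⊔ span ℂ {expL S p.2})ᗮ := by
    rw [← inf_orthogonal, mem_inf, orthogonal_closure, mem_orthogonal_span_iff,
      mem_orthogonal_singleton_iff_inner_right]
    refine ⟨?_, (inner_expL_eq_zero_of_coe_fst_ne hab hL hq hp (hσ ▸ hcoe) :)⟩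
    rintro _ ⟨m, hm, rfl⟩
    exact (inner_expL_eq_zero_of_coe_fst_ne hab hL hq (q := (σ, m)) hm hcoe :)
  rw [inner_eq_zero_symm.mp ((mem_orthogonal _ _).mp hq_orth u hu), mul_zero]

lemma exists_isSpectrum_of_isSpectrumP : ∃ G, IsSpectrum S G := by
  refine ⟨{m | ∃ c : AddCircle (b - a)⁻¹, (c.out, m) ∈ L}, ?_, fun f hf hfG => ?_⟩
  · rintro l ⟨c, hc⟩ m ⟨c', hc'⟩ hlm
    rw [← inner_expL_expL S l m]
    by_cases hcc : c = c'
    · subst hcc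
      exact (inner_expL_eq_zero_of_fst_eq hab hL hc hc' (fun h => hlm (congrArg Prod.snd h)) rfl :)
    · exact (inner_expL_eq_zero_of_coe_fst_ne hab hL hc hc'
        (by rwa [QuotientAddGroup.out_eq', QuotientAddGroup.out_eq']) :)
  have hperp : ∀ p ∈ L, ⟪expL S p.2, hf.toLp f⟫_ℂ = 0 := by
    intro p hp
    refine (mem_orthogonal _ _).mp ?_ _
      (expL_mem_closure_span_fiber hab hL hp (QuotientAddGroup.out_eq' _))
    rw [orthogonal_closure, mem_orthogonal_span_iff]
    rintro _ ⟨m, hm, rfl⟩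
    rw [inner_expL_toLp]
    exact hfG m ⟨_, hm⟩
  have h0 := eq_zero_of_forall_expIntegralIoc_mul_inner_eq_zero hab hL 0 _ fun q hq => by
    rw [hperp q hq, mul_zero]
  filter_upwards [hf.coeFn_toLp, Lp.eq_zero_iff_ae_eq_zero.mp h0] with y h1 h2
  rw [← h1, h2, Pi.zero_apply]

end Forward

lemma isSpectrumP_of_isSpectrum {a b : ℝ} (hab : a < b) {S : Set (Ed n)}
    [IsFiniteMeasure (volume.restrict S)] {G : Set (Ed n)} (hG : IsSpectrum S G) :
    IsSpectrumP (Ioc a b ×ˢ S) {p | (p.1 : AddCircle (b - a)⁻¹) = 0 ∧ p.2 ∈ G} := by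
  refine ⟨?_, fun f hf hperp => ?_⟩
  · rintro p ⟨hp0, hpG⟩ q ⟨hq0, hqG⟩ hpq
    rw [setIntegral_expP_mul_conj_expP]
    by_cases h : p.1 = q.1
    · rw [hG.1 p.2 hpG q.2 hqG (fun h' => hpq (Prod.ext h h')), mul_zero]
    · rw [(expIntegralIoc_eq_zero_iff hab _).mpr
        ⟨sub_ne_zero.mpr h, by rw [AddCircle.coe_sub, hp0, hq0, sub_zero]⟩, zero_mul]
  rw [volume_restrict_prod] at hf ⊢
  have hcoeff : ∀ k : ℤ,
      (fun y => fourierCoeffOn hab (fun x => f (x, y)) k) =ᵐ[volume.restrict S] 0 := by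
    intro k
    refine hG.2 _ (memLp_fourierCoeffOn_section hab hf k) fun m hm => ?_
    have hk : (((k : ℝ) / (b - a) : ℝ) : AddCircle (b - a)⁻¹) = 0 :=
      (AddCircle.coe_eq_zero_iff _).mpr ⟨k, by rw [zsmul_eq_mul, div_eq_mul_inv]⟩
    rw [integral_fourierCoeffOn_section_mul_conj_expF hab (hf.integrable one_le_two),
      ← volume_restrict_prod, hperp _ ⟨hk, hm⟩, mul_zero]
  refine ae_eq_zero_of_ae_section_ae_eq_zero (hf.integrable one_le_two) ?_
  filter_upwards [ae_memLp_two_section hf, ae_all_iff.mpr hcoeff] with y hy hy0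
  exact ae_eq_zero_of_fourierCoeffOn_eq_zero hab hy hy0

end CylinderSpectral

open CylinderSpectral in
theorem stmt19_general {n : ℕ} (I : Set ℝ)
    (hI : ∃ a b : ℝ, a < b ∧ Set.Ioo a b ⊆ I ∧ I ⊆ Set.Icc a b)
    (S : Set (Ed n)) (hB : Bornology.IsBounded S) :
    (∃ L : Set (ℝ × Ed n), IsSpectrumP (I ×ˢ S) L) ↔
    (∃ G : Set (Ed n), IsSpectrum S G) := by
  obtain ⟨a, b, hab, hIoo, hIcc⟩ := hI
  have : IsFiniteMeasure (volume.restrict S) := isFiniteMeasure_restrict.mpr hB.measure_lt_top.ne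
  have hIS : volume.restrict (I ×ˢ S) = volume.restrict (Ioc a b ×ˢ S) := by
    rw [volume_restrict_prod, volume_restrict_prod,
      Measure.restrict_congr_set (ae_eq_Ioc_of_Ioo_subset_of_subset_Icc hIoo hIcc)]
  simp only [isSpectrumP_congr hIS]
  exact ⟨fun ⟨_, hL⟩ => exists_isSpectrum_of_isSpectrumP hab hL,
    fun ⟨_, hG⟩ => ⟨_, isSpectrumP_of_isSpectrum hab hG⟩⟩

theorem stmt19 {n : ℕ} (hn : 1 ≤ n) (I : Set ℝ)
    (hI : ∃ a b : ℝ, a < b ∧ Set.Ioo a b ⊆ I ∧ I ⊆ Set.Icc a b)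
    (S : Set (Ed n)) (hB : Bornology.IsBounded S)
    (hM : MeasurableSet S) (hpos : 0 < volume S) :
    (∃ L : Set (ℝ × Ed n), IsSpectrumP (I ×ˢ S) L) ↔
    (∃ G : Set (Ed n), IsSpectrum S G) :=
  stmt19_general I hI S hB
end
end
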